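/- arXiv:2104.00715 — 4 statements merged into one kernel-verified Lean document; each statement's English description precedes it below -/
import Mathlib

section
/- If (a_n) and (b_n) are sequences of non-negative integers, each log concave with no internal zeros, then their convolution (c_n), defined by c_k = Σ_{i=0}^{k} a_i b_{k-i}, is also log concave with no internal zeros. -/
open Finset

/-- Extension of a `ℕ → ℕ` sequence to `ℤ → ℤ`, zero on negatives. -/
private def extz (f : ℕ → ℕ) (n : ℤ) : ℤ := if 0 ≤ n then (f n.toNat : ℤ) else 0

private lemma extz_nonneg (f : ℕ → ℕ) (n : ℤ) : 0 ≤ extz f n := by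
  unfold extz; split <;> positivity

private lemma extz_neg (f : ℕ → ℕ) {n : ℤ} (h : n < 0) : extz f n = 0 := by
  unfold extz; rw [if_neg (by omega)]

private lemma extz_coe (f : ℕ → ℕ) (n : ℕ) : extz f (n : ℤ) = (f n : ℤ) := by
  unfold extz; rw [if_pos (by positivity)]; norm_num

private lemma keyz (f : ℕ → ℕ)
    (hf : ∀ i j k l : ℕ, i ≤ j → j ≤ k → k ≤ l → j + k = i + l →
      f i * f l ≤ f j * f k)
    (m u v M : ℤ) (h1 : m ≤ u) (h2 : m ≤ v) (h3 : u ≤ M) (h4 : v ≤ M)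
    (h5 : u + v = m + M) :
    extz f m * extz f M ≤ extz f u * extz f v := by
  rcases lt_or_ge m 0 with hm | hm
  · rw [extz_neg f hm, zero_mul]
    exact mul_nonneg (extz_nonneg f u) (extz_nonneg f v)
  · have hu : (0:ℤ) ≤ u := le_trans hm h1
    have hv : (0:ℤ) ≤ v := le_trans hm h2
    have hM : (0:ℤ) ≤ M := le_trans hu h3
    unfold extz
    rw [if_pos hm, if_pos hu, if_pos hv, if_pos hM]
    rcases le_total u v with huv | huv
    · have := hf m.toNat u.toNat v.toNat M.toNat (by omega) (by omega) (by omega)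
        (by omega)
      exact_mod_cast this
    · have := hf m.toNat v.toNat u.toNat M.toNat (by omega) (by omega) (by omega)
        (by omega)
      calc (f m.toNat : ℤ) * f M.toNat ≤ (f v.toNat : ℤ) * f u.toNat := by
            exact_mod_cast this
        _ = (f u.toNat : ℤ) * f v.toNat := by ring

private lemma convz (a b : ℕ → ℕ) (m N d : ℕ) (h : m + d ≤ N) :
    ∑ p ∈ range (N + 1), extz a ((p : ℤ) - d) * extz b ((m : ℤ) + d - p)
      = ((∑ p ∈ range (m + 1), a p * b (m - p) : ℕ) : ℤ) := by
  have hsub : range (m + d + 1) ⊆ range (N + 1) := by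
    apply range_subset_range.2; omega
  rw [← Finset.sum_subset hsub (by
    intro p hp hnp
    simp only [mem_range] at hp hnp
    rw [extz_neg b (by push_cast; omega), mul_zero])]
  have hsplit : m + d + 1 = d + (m + 1) := by omega
  rw [hsplit, Finset.sum_range_add]
  have h0 : ∑ p ∈ range d, extz a ((p : ℤ) - d) * extz b ((m : ℤ) + d - p) = 0 := by
    apply Finset.sum_eq_zero
    intro p hp
    simp only [mem_range] at hp
    rw [extz_neg a (by push_cast; omega), zero_mul]
  rw [h0, zero_add]
  rw [Nat.cast_sum]
  apply Finset.sum_congr rfl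
  intro x hx
  simp only [mem_range] at hx
  have e1 : ((d + x : ℕ) : ℤ) - d = (x : ℕ) := by push_cast; ring
  have e2 : (m : ℤ) + d - ((d + x : ℕ) : ℤ) = ((m - x : ℕ) : ℤ) := by
    push_cast; omega
  rw [e1, e2, extz_coe, extz_coe]
  push_cast; ring

open Finset in
/-- The convolution of two sequences of non-negative integers that are each
log concave with no internal zeros is again log concave with no internal zeros,
where log concavity with no internal zeros is expressed by the condition
`a i * a l ≤ a j * a k` for all `i ≤ j ≤ k ≤ l` with `j + k = i + l`. -/
theorem stmt1 (a b : ℕ → ℕ)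
    (ha : ∀ i j k l : ℕ, i ≤ j → j ≤ k → k ≤ l → j + k = i + l →
      a i * a l ≤ a j * a k)
    (hb : ∀ i j k l : ℕ, i ≤ j → j ≤ k → k ≤ l → j + k = i + l →
      b i * b l ≤ b j * b k) :
    ∀ i j k l : ℕ, i ≤ j → j ≤ k → k ≤ l → j + k = i + l →
      (∑ p ∈ range (i + 1), a p * b (i - p)) * (∑ p ∈ range (l + 1), a p * b (l - p)) ≤
      (∑ p ∈ range (j + 1), a p * b (j - p)) * (∑ p ∈ range (k + 1), a p * b (k - p)) := by
  intro i j k l hij hjk hkl hsum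
  obtain ⟨d, rfl⟩ : ∃ d, j = i + d := ⟨j - i, by omega⟩
  obtain rfl : l = k + d := by omega
  set L := k + d with hL
  -- pass to ℤ
  rw [← Nat.cast_le (α := ℤ)]
  push_cast [← convz a b i L d (by omega), ← convz a b (i + d) L 0 (by omega),
    ← convz a b k L d (by omega), ← convz a b L L 0 (by omega)]
  set A := extz a
  set B := extz b
  -- the four sums, with uniform index range
  set x : ℤ := (i : ℤ) + d with hx
  set y : ℤ := (k : ℤ) + d with hy
  have hxy : x ≤ y := by simp only [hx, hy]; omega
  have hd0 : (0:ℤ) ≤ (d:ℤ) := by positivity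
  -- goal should now be of the form (∑ ...) * (∑ ...) ≤ (∑ ...) * (∑ ...)
  rw [Finset.sum_mul_sum, Finset.sum_mul_sum, ← sub_nonneg, ← Finset.sum_sub_distrib]
  simp_rw [← Finset.sum_sub_distrib]
  have key : ∀ p q : ℤ, p ≤ q →
      A (p - d) * A q ≤ A p * A (q - d) := by
    intro p q hpq
    exact keyz a ha (p - d) p (q - d) q (by omega) (by omega) (by omega) (by omega)
      (by ring)
  have keyB : ∀ p q : ℤ, p ≤ q →
      B (x - q) * B (y - p) ≤ B (x - p) * B (y - q) := by
    intro p q hpq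
    exact keyz b hb (x - q) (x - p) (y - q) (y - p) (by omega) (by omega) (by omega)
      (by omega) (by ring)
  set g : ℤ → ℤ → ℤ := fun p q =>
    (A p * A (q - d) - A (p - d) * A q) * (B (x - p) * B (y - q)) with hg
  have hLy : ((L : ℕ) : ℤ) = y := by rw [hL, hy]; push_cast; ring
  have goalEq : ∀ p ∈ range (L + 1), ∀ q ∈ range (L + 1),
      A ((p:ℤ) - 0) * B (x + 0 - p) * (A ((q:ℤ) - d) * B (y - q)) -
        A ((p:ℤ) - d) * B (x - p) * (A ((q:ℤ) - 0) * B ((L:ℤ) + 0 - q)) = g p q := by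
    intro p _ q _
    rw [hLy, hg]
    ring
  rw [Finset.sum_congr rfl fun p hp => Finset.sum_congr rfl fun q hq => goalEq p hp q hq]
  have hpair : ∀ p q : ℤ, p ≤ q → 0 ≤ g p q + g q p := by
    intro p q hpq
    have h1 := key p q hpq
    have h2 := keyB p q hpq
    have : g p q + g q p =
        (A p * A (q - d) - A (p - d) * A q) *
          (B (x - p) * B (y - q) - B (x - q) * B (y - p)) := by
      rw [hg]; ring
    rw [this]
    exact mul_nonneg (by linarith) (by linarith)
  have h2 : 0 ≤ ∑ p ∈ range (L + 1), ∑ q ∈ range (L + 1), (g p q + g q p) := by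
    apply Finset.sum_nonneg
    intro p _
    apply Finset.sum_nonneg
    intro q _
    rcases le_total (p : ℤ) (q : ℤ) with h | h
    · exact hpair p q h
    · rw [add_comm]; exact hpair q p h
  have e1 : ∑ p ∈ range (L + 1), ∑ q ∈ range (L + 1), (g p q + g q p)
      = (∑ p ∈ range (L + 1), ∑ q ∈ range (L + 1), g p q)
        + ∑ p ∈ range (L + 1), ∑ q ∈ range (L + 1), g (q : ℤ) p := by
    simp [Finset.sum_add_distrib]
  have e2 : ∑ p ∈ range (L + 1), ∑ q ∈ range (L + 1), g (q : ℤ) p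
      = ∑ p ∈ range (L + 1), ∑ q ∈ range (L + 1), g p q := Finset.sum_comm
  linarith
end

section
/- Let R be a commutative ring equipped with a subset P of 'non-negative elements' containing 0, closed under addition and multiplication, and satisfying the property that x ∈ P whenever 2x ∈ P. If (a_n) and (b_n) are sequences in P that are strongly log concave (meaning a_j a_k − a_i a_l ∈ P whenever i ≤ j ≤ k ≤ l and j + k = i + l), then their convolution c_m = Σ_{p+q=m} a_p b_q is also strongly log concave. -/
/-!
Extend `a` and `b` by zero to `ℤ`; the extensions are still strongly log concave. With
`d = j - i = l - k`, shifting the summation index of `c_k` and `c_i` by `d` turns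
`c_j c_k - c_i c_l` into a double sum `∑ t₁ t₂, F t₁ t₂`. Symmetrising,
`2 (c_j c_k - c_i c_l) = ∑ t₁ t₂, (F t₁ t₂ + F t₂ t₁)`, and for `t₁ ≤ t₂` the summand
`F t₁ t₂ + F t₂ t₁` factors as a log-concavity difference of `a` times one of `b`, so lies in `P`.
-/

open Finset

section

variable {R : Type*} [CommRing R]

def StronglyLogConcave {ι : Type*} [Add ι] [LE ι] (S : Set R) (x : ι → R) : Prop :=
  ∀ i j k l : ι, i ≤ j → j ≤ k → k ≤ l → j + k = i + l → x j * x k - x i * x l ∈ S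

def cauchyProduct (a b : ℕ → R) (m : ℕ) : R :=
  ∑ p ∈ range (m + 1), a p * b (m - p)

def extendByZero (v : ℕ → R) (n : ℤ) : R :=
  if 0 ≤ n then v n.toNat else 0

@[simp]
lemma extendByZero_natCast (v : ℕ → R) (n : ℕ) : extendByZero v n = v n := by
  simp [extendByZero]

lemma extendByZero_of_neg (v : ℕ → R) {n : ℤ} (hn : n < 0) : extendByZero v n = 0 :=
  if_neg hn.not_ge

lemma StronglyLogConcave.mul_sub_mul_mem {ι : Type*} [AddCommMagma ι] [LinearOrder ι] {S : Set R}
    {x : ι → R} (hx : StronglyLogConcave S x) {i j k l : ι} (hij : i ≤ j) (hik : i ≤ k)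
    (hjl : j ≤ l) (hkl : k ≤ l) (h : j + k = i + l) : x j * x k - x i * x l ∈ S := by
  rcases le_total j k with hjk | hkj
  · exact hx i j k l hij hjk hkl h
  · rw [mul_comm]
    exact hx i k j l hik hkj hjl (by rwa [add_comm])

lemma cauchyProduct_eq_sum_Icc (a b : ℕ → R) {m e N : ℕ} (h : m + e ≤ N) :
    cauchyProduct a b m =
      ∑ t ∈ Icc (0 : ℤ) N, extendByZero a (t - e) * extendByZero b ((m + e : ℕ) - t) := by
  have hshift : cauchyProduct a b m = ∑ t ∈ Icc (e : ℤ) (m + e),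
      extendByZero a (t - e) * extendByZero b ((m + e : ℕ) - t) := by
    refine sum_nbij' (fun p => p + e) (fun t => (t - e).toNat) ?_ ?_ ?_ ?_ ?_
    · intro p hp
      simp only [mem_range, mem_Icc] at hp ⊢
      omega
    · intro t ht
      simp only [mem_range, mem_Icc] at ht ⊢
      omega
    · intro p _
      simp
    · intro t ht
      simp only [mem_Icc] at ht
      omega
    · intro p hp
      simp only [mem_range] at hp
      rw [add_sub_cancel_right, show ((m + e : ℕ) : ℤ) - (p + e) = (m - p : ℕ) by omega,
        extendByZero_natCast, extendByZero_natCast]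
  rw [hshift]
  refine sum_subset (Icc_subset_Icc (by positivity) (by omega)) fun t _ ht => ?_
  rw [mem_Icc, not_and_or, not_le, not_le] at ht
  rcases ht with ht | ht
  · rw [extendByZero_of_neg a (by omega), zero_mul]
  · rw [extendByZero_of_neg b (by omega), mul_zero]

lemma sum_mul_sum_sub_sum_mul_sum (A B : ℤ → R) (T : Finset ℤ) (d j l : ℤ) :
    (∑ t ∈ T, A t * B (j - t)) * (∑ t ∈ T, A (t - d) * B (l - t)) -
        (∑ t ∈ T, A (t - d) * B (j - t)) * (∑ t ∈ T, A t * B (l - t)) =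
      ∑ t₁ ∈ T, ∑ t₂ ∈ T,
        A t₁ * A (t₂ - d) * (B (j - t₁) * B (l - t₂) - B (j - t₂) * B (l - t₁)) := by
  have hterm : ∀ t₁ t₂,
      A t₁ * A (t₂ - d) * (B (j - t₁) * B (l - t₂) - B (j - t₂) * B (l - t₁)) =
        A t₁ * B (j - t₁) * (A (t₂ - d) * B (l - t₂)) -
          A (t₂ - d) * B (j - t₂) * (A t₁ * B (l - t₁)) := fun _ _ => by ring
  simp only [hterm, sum_sub_distrib]
  rw [sum_comm (f := fun t₁ t₂ => A (t₂ - d) * B (j - t₂) * (A t₁ * B (l - t₁))),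
    ← sum_mul_sum, ← sum_mul_sum]

section Membership

variable (S : NonUnitalSubsemiring R)

lemma extendByZero_mem {v : ℕ → R} (hv : ∀ n, v n ∈ S) (n : ℤ) : extendByZero v n ∈ S := by
  unfold extendByZero
  split
  · exact hv _
  · exact zero_mem S

lemma cauchyProduct_mem {a b : ℕ → R} (ha : ∀ n, a n ∈ S) (hb : ∀ n, b n ∈ S) (m : ℕ) :
    cauchyProduct a b m ∈ S :=
  sum_mem fun p _ => mul_mem (ha p) (hb _)

lemma sum_sum_mem_of_add_swap_mem {ι : Type*} [LinearOrder ι] (hhalf : ∀ x, 2 * x ∈ S → x ∈ S)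
    (T : Finset ι) (f : ι → ι → R) (hf : ∀ t₁ t₂, t₁ ≤ t₂ → f t₁ t₂ + f t₂ t₁ ∈ S) :
    ∑ t₁ ∈ T, ∑ t₂ ∈ T, f t₁ t₂ ∈ S := by
  apply hhalf
  have hswap : ∑ t₁ ∈ T, ∑ t₂ ∈ T, f t₂ t₁ = ∑ t₁ ∈ T, ∑ t₂ ∈ T, f t₁ t₂ := sum_comm
  rw [two_mul]
  nth_rw 2 [← hswap]
  simp only [← sum_add_distrib]
  refine sum_mem fun t₁ _ => sum_mem fun t₂ _ => ?_
  rcases le_total t₁ t₂ with h | h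
  · exact hf t₁ t₂ h
  · rw [add_comm]
    exact hf t₂ t₁ h

variable {S}

lemma stronglyLogConcave_extendByZero {v : ℕ → R} (hvS : ∀ n, v n ∈ S)
    (hv : StronglyLogConcave (S : Set R) v) : StronglyLogConcave (S : Set R) (extendByZero v) := by
  intro i j k l hij hjk hkl h
  rcases lt_or_ge i 0 with hi | hi
  · rw [extendByZero_of_neg v hi, zero_mul, sub_zero]
    exact mul_mem (extendByZero_mem S hvS j) (extendByZero_mem S hvS k)
  · lift i to ℕ using hi
    lift j to ℕ using by omega
    lift k to ℕ using by omega
    lift l to ℕ using by omega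
    simp only [extendByZero_natCast]
    exact hv i j k l (by omega) (by omega) (by omega) (by omega)

theorem StronglyLogConcave.cauchyProduct (hhalf : ∀ x, 2 * x ∈ S → x ∈ S) {a b : ℕ → R}
    (haS : ∀ n, a n ∈ S) (hbS : ∀ n, b n ∈ S)
    (ha : StronglyLogConcave (S : Set R) a) (hb : StronglyLogConcave (S : Set R) b) :
    StronglyLogConcave (S : Set R) (cauchyProduct a b) := by
  intro i j k l hij hjk hkl h
  obtain ⟨d, rfl⟩ := Nat.exists_eq_add_of_le hij
  obtain rfl : l = k + d := by omega
  have hA := stronglyLogConcave_extendByZero haS ha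
  have hB := stronglyLogConcave_extendByZero hbS hb
  rw [cauchyProduct_eq_sum_Icc a b (m := i + d) (e := 0) (N := k + d) (by omega),
    cauchyProduct_eq_sum_Icc a b (m := k) (e := d) (N := k + d) (by omega),
    cauchyProduct_eq_sum_Icc a b (m := i) (e := d) (N := k + d) (by omega),
    cauchyProduct_eq_sum_Icc a b (m := k + d) (e := 0) (N := k + d) (by omega)]
  simp only [Nat.cast_zero, sub_zero, add_zero]
  rw [sum_mul_sum_sub_sum_mul_sum]
  refine sum_sum_mem_of_add_swap_mem S hhalf _ _ fun t₁ t₂ h12 => ?_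
  set A := extendByZero a
  set B := extendByZero b
  set j : ℤ := ((i + d : ℕ) : ℤ) with hj
  set l : ℤ := ((k + d : ℕ) : ℤ) with hl
  have hfactor :
      A t₁ * A (t₂ - d) * (B (j - t₁) * B (l - t₂) - B (j - t₂) * B (l - t₁)) +
          A t₂ * A (t₁ - d) * (B (j - t₂) * B (l - t₁) - B (j - t₁) * B (l - t₂)) =
        (A t₁ * A (t₂ - d) - A (t₁ - d) * A t₂) *
          (B (j - t₁) * B (l - t₂) - B (j - t₂) * B (l - t₁)) := by ring
  rw [hfactor]
  exact mul_mem (hA.mul_sub_mul_mem (by omega) (by omega) (by omega) (by omega) (by omega))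
    (hB.mul_sub_mul_mem (by omega) (by omega) (by omega) (by omega) (by omega))

end Membership

end

open Finset in
/-- In a commutative ring `R` with a subset `P` of "non-negative elements"
containing `0`, closed under addition and multiplication, and such that
`x ∈ P` whenever `2 * x ∈ P`: the convolution of two strongly log concave
sequences with values in `P` is strongly log concave. -/
theorem stmt2 {R : Type*} [CommRing R] (P : Set R)
    (h0 : (0 : R) ∈ P)
    (hadd : ∀ x y, x ∈ P → y ∈ P → x + y ∈ P)
    (hmul : ∀ x y, x ∈ P → y ∈ P → x * y ∈ P)
    (hhalf : ∀ x : R, 2 * x ∈ P → x ∈ P)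
    (a b : ℕ → R)
    (haP : ∀ n, a n ∈ P) (hbP : ∀ n, b n ∈ P)
    (ha : ∀ i j k l : ℕ, i ≤ j → j ≤ k → k ≤ l → j + k = i + l →
      a j * a k - a i * a l ∈ P)
    (hb : ∀ i j k l : ℕ, i ≤ j → j ≤ k → k ≤ l → j + k = i + l →
      b j * b k - b i * b l ∈ P) :
    (∀ m : ℕ, (∑ p ∈ range (m + 1), a p * b (m - p)) ∈ P) ∧
    (∀ i j k l : ℕ, i ≤ j → j ≤ k → k ≤ l → j + k = i + l →
      (∑ p ∈ range (j + 1), a p * b (j - p)) * (∑ p ∈ range (k + 1), a p * b (k - p)) -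
      (∑ p ∈ range (i + 1), a p * b (i - p)) * (∑ p ∈ range (l + 1), a p * b (l - p)) ∈ P) := by
  let S : NonUnitalSubsemiring R :=
    { carrier := P, zero_mem' := h0, add_mem' := hadd _ _, mul_mem' := hmul _ _ }
  exact ⟨cauchyProduct_mem S haP hbP,
    StronglyLogConcave.cauchyProduct (S := S) hhalf haP hbP ha hb⟩
end

section
/- Weak equivariant log concavity with no internal zeros is not preserved under tensor products: there exist graded representations V and W of S_2, each weakly equivariantly log concave with no internal zeros, such that V ⊗ W is not weakly equivariantly log concave. Explicitly, take V with V^0 = V^3 = τ ⊕ σ^{⊕3}, V^1 = V^2 = τ^{⊕2} ⊕ σ^{⊕2}, V^i = 0 otherwise, and W with W^0 = W^1 = τ, W^i = 0 for i > 1; then (V⊗W)^1 ⊗ (V⊗W)^3 does not embed into (V⊗W)^2 ⊗ (V⊗W)^2. -/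
open CategoryTheory MonoidalCategory

noncomputable section

/-- The external direct sum of a finite family of representations. -/
def Representation.pi' {k G : Type*} [CommSemiring k] [Monoid G] {ι : Type*}
    {M : ι → Type*} [∀ i, AddCommMonoid (M i)] [∀ i, Module k (M i)]
    (ρ : ∀ i, Representation k G (M i)) : Representation k G (∀ i, M i) where
  toFun g := LinearMap.pi fun i => (ρ i g) ∘ₗ LinearMap.proj i
  map_one' := by ext; simp
  map_mul' g h := by ext; simp

/-- The sign representation of `S₂` on `ℚ`. -/
def signRepAux : Representation ℚ (Equiv.Perm (Fin 2)) ℚ where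
  toFun g := ((Equiv.Perm.sign g : ℤ) : ℚ) • LinearMap.id
  map_one' := by simp; rfl
  map_mul' g h := by ext; simp [smul_smul]; ring

/-- `τ^{⊕ a} ⊕ σ^{⊕ b}`, where `τ` is the trivial representation of `S₂` and `σ` is the
sign representation. -/
def VS2 (a b : ℕ) : FDRep ℚ (Equiv.Perm (Fin 2)) :=
  FDRep.of (Representation.pi' fun x : Fin a ⊕ Fin b =>
    Sum.elim (fun _ => Representation.trivial ℚ (G := Equiv.Perm (Fin 2)) (V := ℚ))
      (fun _ => signRepAux) x)

/-- `X` is isomorphic to a subrepresentation of `Y`. -/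
def IsSubrep (X Y : FDRep ℚ (Equiv.Perm (Fin 2))) : Prop := ∃ f : X ⟶ Y, Mono f

/-- A graded representation is weakly equivariantly log concave if `V^{i-1} ⊗ V^{i+1}`
is isomorphic to a subrepresentation of `V^i ⊗ V^i` for all `i ≥ 1`. -/
def WeakELC (V : ℕ → FDRep ℚ (Equiv.Perm (Fin 2))) : Prop :=
  ∀ i : ℕ, 1 ≤ i → IsSubrep (V (i - 1) ⊗ V (i + 1)) (V i ⊗ V i)

/-- The degree-`m` piece `⊕_{p+q=m} V^p ⊗ W^q` of the tensor product of two graded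
representations. -/
def gradedTensor (V W : ℕ → FDRep ℚ (Equiv.Perm (Fin 2))) (m : ℕ) :
    FDRep ℚ (Equiv.Perm (Fin 2)) :=
  FDRep.of (Representation.pi' fun p : Fin (m + 1) =>
    Representation.tprod (V p).ρ (W (m - (p : ℕ))).ρ)

/-- `V^0 = V^3 = τ ⊕ σ^{⊕3}`, `V^1 = V^2 = τ^{⊕2} ⊕ σ^{⊕2}`, `V^i = 0` otherwise. -/
def Vex : ℕ → FDRep ℚ (Equiv.Perm (Fin 2)) := fun i =>
  if i = 0 ∨ i = 3 then VS2 1 3 else if i = 1 ∨ i = 2 then VS2 2 2 else VS2 0 0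

/-- `W^0 = W^1 = τ` and `W^i = 0` for `i > 1`. -/
def Wex : ℕ → FDRep ℚ (Equiv.Perm (Fin 2)) := fun i =>
  if i ≤ 1 then VS2 1 0 else VS2 0 0

/-! Over `ℚ` a representation `X` of `S₂` splits into the `±1`-eigenspaces of the transposition
`s`, so `X ≅ τ^a ⊕ σ^b` with `2a = χ(1) + χ(s)` and `2b = χ(1) - χ(s)`, and `X` embeds into `Y`
exactly when neither multiplicity decreases. Everything is then a character computation:
`(V ⊗ W)^1` and `(V ⊗ W)^3` have character `(8, -2)` while `(V ⊗ W)^2` has `(8, 0)`, so `τ`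
occurs `34` times in `(V ⊗ W)^1 ⊗ (V ⊗ W)^3` but only `32` times in `(V ⊗ W)^2 ⊗ (V ⊗ W)^2`. -/

universe u

open Module

theorem LinearMap.trace_piMap {R ι : Type*} [CommRing R] [Fintype ι] [DecidableEq ι]
    {M : ι → Type*} [∀ i, AddCommGroup (M i)] [∀ i, Module R (M i)]
    [∀ i, Module.Free R (M i)] [∀ i, Module.Finite R (M i)] (f : ∀ i, M i →ₗ[R] M i) :
    trace R (∀ i, M i) (piMap f) = ∑ i, trace R (M i) (f i) := by
  let b i := Module.Free.chooseBasis R (M i)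
  rw [trace_eq_matrix_trace R (Pi.basis b), Matrix.trace, ← Finset.univ_sigma_univ,
    Finset.sum_sigma]
  refine Finset.sum_congr rfl fun i _ => ?_
  rw [trace_eq_matrix_trace R (b i), Matrix.trace]
  refine Finset.sum_congr rfl fun j _ => ?_
  simp [Matrix.diag, LinearMap.toMatrix_apply, Pi.basis_apply, Pi.basis_repr]

theorem Representation.char_pi' {k G ι : Type*} [Field k] [Monoid G] [Fintype ι] [DecidableEq ι]
    {M : ι → Type*} [∀ i, AddCommGroup (M i)] [∀ i, Module k (M i)]
    [∀ i, FiniteDimensional k (M i)] (ρ : ∀ i, Representation k G (M i)) (g : G) :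
    (pi' ρ).character g = ∑ i, (ρ i).character g :=
  LinearMap.trace_piMap fun i => ρ i g

theorem FDRep.character_of {k G V : Type u} [Field k] [Monoid G] [AddCommGroup V] [Module k V]
    [FiniteDimensional k V] (ρ : Representation k G V) : (FDRep.of ρ).character = ρ.character :=
  rfl

theorem FDRep.injective_of_mono {k G : Type u} [Field k] [Monoid G] {X Y : FDRep k G}
    (f : X ⟶ Y) [Mono f] : Function.Injective (ConcreteCategory.hom f.hom) :=
  (ModuleCat.mono_iff_injective _).1
    (inferInstance : Mono ((forget₂ (FGModuleCat k) (ModuleCat k)).map ((Action.forget _ _).map f)))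

namespace Module.End

variable {K V W : Type*} [Field K] [AddCommGroup V] [Module K V] [AddCommGroup W] [Module K W]
  {T : Module.End K V} {S : Module.End K W}

theorem finrank_eigenspace_le_of_injective [FiniteDimensional K W] {f : V →ₗ[K] W}
    (hf : Function.Injective f) (hfTS : f ∘ₗ T = S ∘ₗ f) (μ : K) :
    finrank K (T.eigenspace μ) ≤ finrank K (S.eigenspace μ) := by
  have hmaps : ∀ x ∈ T.eigenspace μ, f x ∈ S.eigenspace μ := fun x hx => by
    rw [mem_eigenspace_iff] at hx ⊢
    rw [← LinearMap.comp_apply, ← hfTS, LinearMap.comp_apply, hx, map_smul]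
  exact LinearMap.finrank_le_finrank_of_injective (f := f.restrict hmaps)
    fun x y hxy => Subtype.ext (hf (congrArg Subtype.val hxy))

variable [NeZero (2 : K)]

theorem isProj_eigenspace_one (hT : T * T = 1) :
    LinearMap.IsProj (T.eigenspace 1) ((2⁻¹ : K) • (1 + T)) := by
  refine ⟨fun x => ?_, fun x hx => ?_⟩
  · rw [mem_eigenspace_iff, one_smul, LinearMap.smul_apply, map_smul, LinearMap.add_apply,
      map_add, one_apply, show T (T x) = x from LinearMap.congr_fun hT x, add_comm]
  · rw [mem_eigenspace_iff, one_smul] at hx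
    rw [LinearMap.smul_apply, LinearMap.add_apply, one_apply, hx, ← two_smul K, smul_smul,
      inv_mul_cancel₀ two_ne_zero, one_smul]

theorem ker_inv_two_smul_one_add :
    LinearMap.ker ((2⁻¹ : K) • (1 + T)) = T.eigenspace (-1) := by
  ext x
  rw [LinearMap.mem_ker, mem_eigenspace_iff, LinearMap.smul_apply, smul_eq_zero,
    LinearMap.add_apply, one_apply, neg_one_smul, add_comm, ← eq_neg_iff_add_eq_zero]
  simp [two_ne_zero]

theorem isCompl_eigenspace_one_neg_one (hT : T * T = 1) :
    IsCompl (T.eigenspace 1) (T.eigenspace (-1)) :=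
  ker_inv_two_smul_one_add (T := T) ▸ (isProj_eigenspace_one hT).isCompl

theorem trace_eq_of_mul_self_eq_one [FiniteDimensional K V] (hT : T * T = 1) :
    LinearMap.trace K V T =
      finrank K (T.eigenspace 1) - finrank K (T.eigenspace (-1)) := by
  have hdim := Submodule.finrank_add_eq_of_isCompl (isCompl_eigenspace_one_neg_one hT)
  have htr := (isProj_eigenspace_one hT).trace
  rw [map_smul, map_add, LinearMap.trace_one, ← hdim, smul_eq_mul,
    inv_mul_eq_iff_eq_mul₀ two_ne_zero] at htr
  push_cast at htr
  linear_combination htr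

theorem exists_injective_comp_eq_iff [FiniteDimensional K V] [FiniteDimensional K W]
    (hT : T * T = 1) (hS : S * S = 1) :
    (∃ f : V →ₗ[K] W, Function.Injective f ∧ f ∘ₗ T = S ∘ₗ f) ↔
      finrank K (T.eigenspace 1) ≤ finrank K (S.eigenspace 1) ∧
        finrank K (T.eigenspace (-1)) ≤ finrank K (S.eigenspace (-1)) := by
  refine ⟨fun ⟨f, hf, hfTS⟩ => ⟨finrank_eigenspace_le_of_injective hf hfTS 1,
    finrank_eigenspace_le_of_injective hf hfTS (-1)⟩, fun ⟨h₁, h₂⟩ => ?_⟩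
  obtain ⟨φ, hφ⟩ := finrank_le_iff_exists_linearMap.1 h₁
  obtain ⟨ψ, hψ⟩ := finrank_le_iff_exists_linearMap.1 h₂
  have hV := isCompl_eigenspace_one_neg_one hT
  let eV := Submodule.prodEquivOfIsCompl _ _ hV
  let eW := Submodule.prodEquivOfIsCompl _ _ (isCompl_eigenspace_one_neg_one hS)
  refine ⟨eW.toLinearMap ∘ₗ φ.prodMap ψ ∘ₗ eV.symm.toLinearMap,
    eW.injective.comp ((hφ.prodMap hψ).comp eV.symm.injective), ?_⟩
  refine LinearMap.ext_on_codisjoint hV.codisjoint (fun x hx => ?_) (fun x hx => ?_)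
  · have hTx : T x = x := by simpa using mem_eigenspace_iff.1 hx
    have hS : S (φ ⟨x, hx⟩) = φ ⟨x, hx⟩ := by simpa using mem_eigenspace_iff.1 (φ ⟨x, hx⟩).2
    have hx' : eV.symm x = (⟨x, hx⟩, 0) :=
      Submodule.prodEquivOfIsCompl_symm_apply_left _ _ hV ⟨x, hx⟩
    simp only [LinearMap.comp_apply, LinearEquiv.coe_coe, hTx, hx']
    simp [eW, hS]
  · have hTx : T x = -x := by simpa using mem_eigenspace_iff.1 hx
    have hS : S (ψ ⟨x, hx⟩) = -ψ ⟨x, hx⟩ := by simpa using mem_eigenspace_iff.1 (ψ ⟨x, hx⟩).2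
    have hx' : eV.symm x = (0, ⟨x, hx⟩) :=
      Submodule.prodEquivOfIsCompl_symm_apply_right _ _ hV ⟨x, hx⟩
    simp only [LinearMap.comp_apply, LinearEquiv.coe_coe, hTx, map_neg, hx']
    simp [eW, hS]

end Module.End

namespace PermFinTwo

open Module.End

variable (X Y : FDRep ℚ (Equiv.Perm (Fin 2)))

theorem rho_swap_mul_self : X.ρ (Equiv.swap 0 1) * X.ρ (Equiv.swap 0 1) = 1 := by
  rw [← map_mul, Equiv.swap_mul_self, map_one]

def multTrivial : ℕ := finrank ℚ (eigenspace (X.ρ (Equiv.swap 0 1)) 1)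

def multSign : ℕ := finrank ℚ (eigenspace (X.ρ (Equiv.swap 0 1)) (-1))

theorem multTrivial_add_multSign : multTrivial X + multSign X = finrank ℚ X :=
  Submodule.finrank_add_eq_of_isCompl (isCompl_eigenspace_one_neg_one (rho_swap_mul_self X))

theorem character_swap : X.character (Equiv.swap 0 1) = multTrivial X - multSign X :=
  trace_eq_of_mul_self_eq_one (rho_swap_mul_self X)

theorem two_mul_multTrivial :
    2 * (multTrivial X : ℚ) = X.character 1 + X.character (Equiv.swap 0 1) := by
  rw [character_swap, FDRep.char_one, ← multTrivial_add_multSign]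
  push_cast; ring

theorem two_mul_multSign :
    2 * (multSign X : ℚ) = X.character 1 - X.character (Equiv.swap 0 1) := by
  rw [character_swap, FDRep.char_one, ← multTrivial_add_multSign]
  push_cast; ring

variable {X Y}

theorem isSubrep_iff_exists_injective : IsSubrep X Y ↔ ∃ f : X →ₗ[ℚ] Y,
    Function.Injective f ∧ f ∘ₗ X.ρ (Equiv.swap 0 1) = Y.ρ (Equiv.swap 0 1) ∘ₗ f := by
  constructor
  · rintro ⟨f, hf⟩
    exact ⟨ConcreteCategory.hom f.hom, FDRep.injective_of_mono f,
      LinearMap.ext fun x => ConcreteCategory.congr_hom (f.comm _) x⟩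
  · rintro ⟨f, hf, hfs⟩
    have hcomm (g : Equiv.Perm (Fin 2)) : f ∘ₗ X.ρ g = Y.ρ g ∘ₗ f := by
      obtain rfl | rfl : g = 1 ∨ g = Equiv.swap 0 1 := by revert g; decide
      · rw [map_one, map_one]; rfl
      · exact hfs
    let F : X ⟶ Y := ⟨FGModuleCat.ofHom f, fun g => by ext x; exact LinearMap.congr_fun (hcomm g) x⟩
    exact ⟨F, ConcreteCategory.mono_of_injective F hf⟩

theorem isSubrep_iff_mult :
    IsSubrep X Y ↔ multTrivial X ≤ multTrivial Y ∧ multSign X ≤ multSign Y :=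
  isSubrep_iff_exists_injective.trans
    (exists_injective_comp_eq_iff (rho_swap_mul_self X) (rho_swap_mul_self Y))

theorem isSubrep_iff_character : IsSubrep X Y ↔
    X.character 1 + X.character (Equiv.swap 0 1) ≤ Y.character 1 + Y.character (Equiv.swap 0 1) ∧
    X.character 1 - X.character (Equiv.swap 0 1) ≤
      Y.character 1 - Y.character (Equiv.swap 0 1) := by
  rw [isSubrep_iff_mult, ← two_mul_multTrivial, ← two_mul_multTrivial, ← two_mul_multSign,
    ← two_mul_multSign]
  simp

theorem isSubrep_of_finrank_eq_zero (h : finrank ℚ X = 0) : IsSubrep X Y := by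
  have := multTrivial_add_multSign X
  exact isSubrep_iff_mult.2 ⟨by omega, by omega⟩

end PermFinTwo

open PermFinTwo

theorem character_VS2 (a b : ℕ) (g : Equiv.Perm (Fin 2)) :
    (VS2 a b).character g = a + b * (Equiv.Perm.sign g : ℤ) := by
  rw [VS2, FDRep.character_of, Representation.char_pi', Fintype.sum_sum_type]
  simp [Representation.character, signRepAux]

theorem finrank_VS2 (a b : ℕ) : finrank ℚ (VS2 a b) = a + b := by
  have := FDRep.char_one (VS2 a b)
  rw [character_VS2, Equiv.Perm.sign_one, Units.val_one, Int.cast_one, mul_one] at this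
  exact_mod_cast this.symm

theorem character_gradedTensor (V W : ℕ → FDRep ℚ (Equiv.Perm (Fin 2))) (m : ℕ)
    (g : Equiv.Perm (Fin 2)) : (gradedTensor V W m).character g =
      ∑ p : Fin (m + 1), (V p).character g * (W (m - p)).character g := by
  rw [gradedTensor, FDRep.character_of, Representation.char_pi']
  simp only [Representation.char_tensor, Pi.mul_apply]
  rfl

theorem isSubrep_tensor_VS2_zero (X Y : FDRep ℚ (Equiv.Perm (Fin 2))) :
    IsSubrep (X ⊗ VS2 0 0) Y := by
  refine isSubrep_of_finrank_eq_zero ?_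
  have := FDRep.char_one (X ⊗ VS2 0 0)
  rw [FDRep.char_tensor, Pi.mul_apply, character_VS2] at this
  simp at this
  exact_mod_cast this.symm

theorem Vex_of_three_lt {i : ℕ} (hi : 3 < i) : Vex i = VS2 0 0 := by
  rw [Vex, if_neg (by omega), if_neg (by omega)]

theorem Wex_of_one_lt {i : ℕ} (hi : 1 < i) : Wex i = VS2 0 0 := by
  rw [Wex, if_neg (by omega)]

theorem weakELC_Vex : WeakELC Vex := by
  intro i hi
  obtain hi' | hi' : i ≤ 2 ∨ 3 ≤ i := by omega
  · interval_cases i <;>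
      norm_num [isSubrep_iff_character, Vex, character_VS2, -FDRep.char_one]
  · rw [Vex_of_three_lt (i := i + 1) (by omega)]
    exact isSubrep_tensor_VS2_zero _ _

theorem weakELC_Wex : WeakELC Wex := by
  intro i hi
  rw [Wex_of_one_lt (i := i + 1) (by omega)]
  exact isSubrep_tensor_VS2_zero _ _

theorem not_isSubrep_gradedTensor : ¬ IsSubrep (gradedTensor Vex Wex 1 ⊗ gradedTensor Vex Wex 3)
    (gradedTensor Vex Wex 2 ⊗ gradedTensor Vex Wex 2) := by
  rw [isSubrep_iff_character]
  norm_num [character_gradedTensor, Fin.sum_univ_succ, Vex, Wex, character_VS2, -FDRep.char_one]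

/-- Weak equivariant log concavity with no internal zeros is not preserved under tensor
products: `V` and `W` are weakly equivariantly log concave with no internal zeros, but
`(V ⊗ W)^1 ⊗ (V ⊗ W)^3` does not embed into `(V ⊗ W)^2 ⊗ (V ⊗ W)^2`, so `V ⊗ W` is not
weakly equivariantly log concave. -/
theorem stmt9 :
    WeakELC Vex ∧
    (∀ i : ℕ, i ≤ 3 → Module.finrank ℚ (Vex i) ≠ 0) ∧
    (∀ i : ℕ, 3 < i → Module.finrank ℚ (Vex i) = 0) ∧
    WeakELC Wex ∧
    (∀ i : ℕ, i ≤ 1 → Module.finrank ℚ (Wex i) ≠ 0) ∧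
    (∀ i : ℕ, 1 < i → Module.finrank ℚ (Wex i) = 0) ∧
    ¬ IsSubrep (gradedTensor Vex Wex 1 ⊗ gradedTensor Vex Wex 3)
        (gradedTensor Vex Wex 2 ⊗ gradedTensor Vex Wex 2) ∧
    ¬ WeakELC (gradedTensor Vex Wex) := by
  refine ⟨weakELC_Vex, fun i hi => ?_, fun i hi => ?_, weakELC_Wex, fun i hi => ?_,
    fun i hi => ?_, not_isSubrep_gradedTensor,
    fun h => not_isSubrep_gradedTensor (h 2 one_le_two)⟩
  · rw [← Nat.cast_ne_zero (R := ℚ), ← FDRep.char_one]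
    interval_cases i <;> norm_num [Vex, character_VS2, -FDRep.char_one]
  · rw [Vex_of_three_lt hi, finrank_VS2]
  · rw [← Nat.cast_ne_zero (R := ℚ), ← FDRep.char_one]
    interval_cases i <;> norm_num [Wex, character_VS2, -FDRep.char_one]
  · rw [Wex_of_one_lt hi, finrank_VS2]

end
end

section
/- In the polynomial ring ℚ[h_{ijk} : i,j,k ∈ [n] distinct] modulo the relations h_{ijk} + h_{jik} = 0, h_{ijk} + h_{ikj} = 0, h_{ijk} − h_{ijl} + h_{ikl} − h_{jkl} = 0 (for all distinct i,j,k,l), and h_{ijk}^2 = 0, the elements x_{ij} := (1/n) Σ_{k ≠ i, k ≠ j} h_{ijk} satisfy x_{ij} + x_{ji} = 0 and Σ_{j ≠ i} x_{ij} = 0 for every i, and h_{ijk} = x_{ij} + x_{jk} + x_{ki} for all distinct i, j, k. -/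
open MvPolynomial

noncomputable section

/-- Ordered triples of pairwise distinct elements of `Fin n`, indexing the
generators `h_{ijk}`. -/
abbrev Triples (n : ℕ) :=
  {t : Fin n × Fin n × Fin n // t.1 ≠ t.2.1 ∧ t.2.1 ≠ t.2.2 ∧ t.1 ≠ t.2.2}

/-- The generator `h_{ijk}` for pairwise distinct `i, j, k`. -/
def hGen {n : ℕ} (i j k : Fin n) (hij : i ≠ j) (hjk : j ≠ k) (hik : i ≠ k) :
    MvPolynomial (Triples n) ℚ :=
  X ⟨(i, j, k), ⟨hij, hjk, hik⟩⟩

/-- The defining relations of the ring `D_n`: antisymmetry `h_{ijk} + h_{jik}` and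
`h_{ijk} + h_{ikj}`, the cocycle relation `h_{ijk} - h_{ijl} + h_{ikl} - h_{jkl}`,
and the squares `h_{ijk}^2`, over all pairwise distinct indices. -/
def relD (n : ℕ) : Set (MvPolynomial (Triples n) ℚ) :=
  {f | (∃ (i j k : Fin n) (hij : i ≠ j) (hjk : j ≠ k) (hik : i ≠ k),
         f = hGen i j k hij hjk hik + hGen j i k hij.symm hik hjk) ∨
       (∃ (i j k : Fin n) (hij : i ≠ j) (hjk : j ≠ k) (hik : i ≠ k),
         f = hGen i j k hij hjk hik + hGen i k j hik hjk.symm hij) ∨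
       (∃ (i j k l : Fin n) (hij : i ≠ j) (hik : i ≠ k) (hil : i ≠ l)
          (hjk : j ≠ k) (hjl : j ≠ l) (hkl : k ≠ l),
         f = hGen i j k hij hjk hik - hGen i j l hij hjl hil +
             hGen i k l hik hkl hil - hGen j k l hjk hkl hjl) ∨
       (∃ (i j k : Fin n) (hij : i ≠ j) (hjk : j ≠ k) (hik : i ≠ k),
         f = hGen i j k hij hjk hik ^ 2)}

/-- The quotient ring `D_n = ℚ[h_{ijk}]/I^D`. -/
abbrev Dring (n : ℕ) := MvPolynomial (Triples n) ℚ ⧸ Ideal.span (relD n)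

/-- The quotient map. -/
def mkD (n : ℕ) : MvPolynomial (Triples n) ℚ →+* Dring n :=
  Ideal.Quotient.mk (Ideal.span (relD n))

/-- The element `x_{ij} := (1/n) Σ_{k ≠ i, j} h_{ijk}` of `D_n`, for `i ≠ j`. -/
def xElem {n : ℕ} (i j : Fin n) (h : i ≠ j) : Dring n :=
  (n : ℚ)⁻¹ • ∑ k : {k : Fin n // k ≠ i ∧ k ≠ j},
    mkD n (hGen i j k.1 h (Ne.symm k.2.2) (Ne.symm k.2.1))

namespace Aux17

variable {n : ℕ}

/-- Total version of the generator image in `D_n`, zero when indices collide. -/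
def Hfun (i j k : Fin n) : Dring n :=
  if h : i ≠ j ∧ j ≠ k ∧ i ≠ k then mkD n (hGen i j k h.1 h.2.1 h.2.2) else 0

lemma rel_zero {f : MvPolynomial (Triples n) ℚ} (hf : f ∈ relD n) : mkD n f = 0 :=
  Ideal.Quotient.eq_zero_iff_mem.mpr (Ideal.subset_span hf)

lemma Hskew1 (i j k : Fin n) : Hfun i j k + Hfun j i k = 0 := by
  by_cases h : i ≠ j ∧ j ≠ k ∧ i ≠ k
  · rw [Hfun, Hfun, dif_pos h, dif_pos (show j ≠ i ∧ i ≠ k ∧ j ≠ k from ⟨h.1.symm, h.2.2, h.2.1⟩)]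
    have := rel_zero (n := n) (Or.inl ⟨i, j, k, h.1, h.2.1, h.2.2, rfl⟩)
    rw [map_add] at this
    exact this
  · have h' : ¬ (j ≠ i ∧ i ≠ k ∧ j ≠ k) := by tauto
    rw [Hfun, Hfun, dif_neg h, dif_neg h', add_zero]

lemma Hskew2 (i j k : Fin n) : Hfun i j k + Hfun i k j = 0 := by
  by_cases h : i ≠ j ∧ j ≠ k ∧ i ≠ k
  · rw [Hfun, Hfun, dif_pos h, dif_pos (show i ≠ k ∧ k ≠ j ∧ i ≠ j from ⟨h.2.2, h.2.1.symm, h.1⟩)]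
    have := rel_zero (n := n) (Or.inr (Or.inl ⟨i, j, k, h.1, h.2.1, h.2.2, rfl⟩))
    rw [map_add] at this
    exact this
  · have h' : ¬ (i ≠ k ∧ k ≠ j ∧ i ≠ j) := by tauto
    rw [Hfun, Hfun, dif_neg h, dif_neg h', add_zero]

lemma Hcocycle (i j k l : Fin n) (hij : i ≠ j) (hik : i ≠ k) (hil : i ≠ l)
    (hjk : j ≠ k) (hjl : j ≠ l) (hkl : k ≠ l) :
    Hfun i j k - Hfun i j l + Hfun i k l - Hfun j k l = 0 := by
  rw [Hfun, Hfun, Hfun, Hfun, dif_pos ⟨hij, hjk, hik⟩, dif_pos ⟨hij, hjl, hil⟩,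
    dif_pos ⟨hik, hkl, hil⟩, dif_pos ⟨hjk, hkl, hjl⟩]
  have := rel_zero (n := n)
    (Or.inr (Or.inr (Or.inl ⟨i, j, k, l, hij, hik, hil, hjk, hjl, hkl, rfl⟩)))
  rw [map_sub, map_add, map_sub] at this
  exact this

lemma Hzero₁ (i k : Fin n) : Hfun i i k = 0 := by
  rw [Hfun, dif_neg]; tauto

lemma Hzero₂ (i j : Fin n) : Hfun i j j = 0 := by
  rw [Hfun, dif_neg]; tauto

lemma Hzero₃ (i j : Fin n) : Hfun i j i = 0 := by
  rw [Hfun, dif_neg]; tauto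

lemma xElem_eq (i j : Fin n) (h : i ≠ j) :
    xElem i j h = (n : ℚ)⁻¹ • ∑ k : Fin n, Hfun i j k := by
  rw [xElem]
  congr 1
  have h1 : ∀ k : {k : Fin n // k ≠ i ∧ k ≠ j},
      mkD n (hGen i j k.1 h (Ne.symm k.2.2) (Ne.symm k.2.1)) = Hfun i j k.1 := by
    intro k
    rw [Hfun, dif_pos (show i ≠ j ∧ j ≠ k.1 ∧ i ≠ k.1 from ⟨h, Ne.symm k.2.2, Ne.symm k.2.1⟩)]
  rw [Finset.sum_congr rfl (fun k _ => h1 k)]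
  rw [← Finset.sum_subtype (Finset.univ.filter (fun k : Fin n => k ≠ i ∧ k ≠ j))
    (by simp) (fun k => Hfun i j k)]
  refine Finset.sum_subset (Finset.filter_subset _ _) ?_
  intro x _ hx
  simp only [Finset.mem_filter, Finset.mem_univ, true_and, not_and_or, not_not] at hx
  rcases hx with rfl | rfl
  · exact Hzero₃ _ _
  · exact Hzero₂ _ _

end Aux17

set_option maxHeartbeats 1000000 in
open Aux17 in
/-- In `D_n`, the elements `x_{ij} = (1/n) Σ_{k ≠ i,j} h_{ijk}` satisfy
`x_{ij} + x_{ji} = 0`, `Σ_{j ≠ i} x_{ij} = 0` for every `i`, and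
`h_{ijk} = x_{ij} + x_{jk} + x_{ki}` for all pairwise distinct `i, j, k`. -/
theorem stmt17 (n : ℕ) (hn : 3 ≤ n) :
    (∀ (i j : Fin n) (h : i ≠ j), xElem i j h + xElem j i h.symm = 0) ∧
    (∀ i : Fin n, ∑ j : {j : Fin n // j ≠ i}, xElem i j.1 (Ne.symm j.2) = 0) ∧
    (∀ (i j k : Fin n) (hij : i ≠ j) (hjk : j ≠ k) (hik : i ≠ k),
      mkD n (hGen i j k hij hjk hik) =
        xElem i j hij + xElem j k hjk + xElem k i hik.symm) := by
  have hn0 : (n : ℚ) ≠ 0 := by positivity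
  refine ⟨?_, ?_, ?_⟩
  · intro i j h
    rw [xElem_eq i j h, xElem_eq j i h.symm, ← smul_add, ← Finset.sum_add_distrib]
    rw [Finset.sum_congr rfl (fun k _ => Hskew1 i j k)]
    simp
  · intro i
    have step : ∀ j : {j : Fin n // j ≠ i},
        xElem i j.1 (Ne.symm j.2) = (n : ℚ)⁻¹ • ∑ k : Fin n, Hfun i j.1 k :=
      fun j => xElem_eq i j.1 (Ne.symm j.2)
    rw [Finset.sum_congr rfl (fun j _ => step j), ← Finset.smul_sum]
    have hext : ∑ j : {j : Fin n // j ≠ i}, ∑ k : Fin n, Hfun i j.1 k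
        = ∑ j : Fin n, ∑ k : Fin n, Hfun i j k := by
      rw [← Finset.sum_subtype (Finset.univ.filter (fun j : Fin n => j ≠ i))
        (by simp) (fun j => ∑ k : Fin n, Hfun i j k)]
      refine Finset.sum_subset (Finset.filter_subset _ _) ?_
      intro x _ hx
      simp only [Finset.mem_filter, Finset.mem_univ, true_and, not_not] at hx
      subst hx
      exact Finset.sum_eq_zero fun k _ => Hzero₁ _ k
    rw [hext]
    have hS : ∑ j : Fin n, ∑ k : Fin n, Hfun i j k = 0 := by
      set S := ∑ j : Fin n, ∑ k : Fin n, Hfun i j k with hSdef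
      have hanti : S = -S := by
        calc S = ∑ j : Fin n, ∑ k : Fin n, -Hfun i k j := by
                refine Finset.sum_congr rfl fun j _ => Finset.sum_congr rfl fun k _ => ?_
                have := Hskew2 i j k
                linear_combination (norm := module) this
          _ = -∑ k : Fin n, ∑ j : Fin n, Hfun i k j := by
                rw [← Finset.sum_neg_distrib]
                simp_rw [Finset.sum_neg_distrib]
                rw [Finset.sum_comm]
          _ = -S := rfl
      have h2 : (2 : ℚ) • S = 0 := by
        rw [two_smul]
        linear_combination (norm := module) hanti
      have hS2 : S = ((2 : ℚ)⁻¹ * 2) • S := by norm_num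
      rw [hS2, mul_smul, h2, smul_zero]
    rw [hS, smul_zero]
  · intro i j k hij hjk hik
    rw [xElem_eq i j hij, xElem_eq j k hjk, xElem_eq k i hik.symm,
      ← smul_add, ← smul_add, ← Finset.sum_add_distrib, ← Finset.sum_add_distrib]
    have key : ∀ l : Fin n, Hfun i j l + Hfun j k l + Hfun k i l
        = mkD n (hGen i j k hij hjk hik) := by
      intro l
      have hH : Hfun i j k = mkD n (hGen i j k hij hjk hik) := by
        rw [Hfun, dif_pos ⟨hij, hjk, hik⟩]
      rw [← hH]
      by_cases hli : l = i
      · rw [hli, Hzero₃, Hzero₂, zero_add, add_zero]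
        rw [eq_neg_of_add_eq_zero_left (Hskew2 j k i),
          eq_neg_of_add_eq_zero_right (Hskew1 i j k), neg_neg]
      by_cases hlj : l = j
      · rw [hlj, Hzero₂, Hzero₃, zero_add, zero_add]
        rw [eq_neg_of_add_eq_zero_left (Hskew1 k i j),
          eq_neg_of_add_eq_zero_right (Hskew2 i j k), neg_neg]
      by_cases hlk : l = k
      · rw [hlk, Hzero₂, Hzero₃, add_zero, add_zero]
      · have hco := Hcocycle i j k l hij hik (Ne.symm hli) hjk (Ne.symm hlj) (Ne.symm hlk)
        rw [eq_neg_of_add_eq_zero_left (Hskew1 k i l)]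
        have hco' : Hfun i j k = Hfun i j l - Hfun i k l + Hfun j k l := by
          linear_combination (norm := abel) hco
        rw [hco']
        abel
    rw [Finset.sum_congr rfl (fun l _ => key l), Finset.sum_const, Finset.card_univ,
      Fintype.card_fin, ← Nat.cast_smul_eq_nsmul ℚ, smul_smul, inv_mul_cancel₀ hn0, one_smul]


end
end
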